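/- Let p ≡ 7 (mod 8) be a prime, let √2 denote a square root of 2 in Z_{p²}, and suppose the image of θ = 1 + √2 generates the quotient of the unit group U(p²) of Z_{p²} by {1,−1}. Then for α, β ∈ Z_{p²} not divisible by p, a PPS(Z_{p²}, {0, α, −α, pα, −pα}, {0, β, −β, pβ, −pβ}) exists if and only if 2α² − β² = 0 in Z_{p²}. -/

import Mathlib

open scoped Classical

/-- `IsPPS A₁ A₂ S`: `S` is a partial partitionable set for the subsets `A₁`, `A₂`
of the abelian group `G`: the multiset of the four elements `x, -x, y, -y` over all
pairs `(x,y) ∈ S` covers each element of `G \ A₁` exactly once (and elements of `A₁`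
zero times), and the multiset of the four elements `x+y, -(x+y), x-y, -(x-y)` covers
each element of `G \ A₂` exactly once (and elements of `A₂` zero times). -/
def IsPPS {G : Type*} [AddCommGroup G] (A₁ A₂ : Set G) (S : Finset (G × G)) : Prop :=
  (∀ z : G, (S.val.bind fun p => ({p.1, -p.1, p.2, -p.2} : Multiset G)).count z
      = if z ∈ A₁ then 0 else 1) ∧
  (∀ z : G, (S.val.bind fun p =>
      ({p.1 + p.2, -(p.1 + p.2), p.1 - p.2, -(p.1 - p.2)} : Multiset G)).count z
      = if z ∈ A₂ then 0 else 1)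

/-- An almost partitionable set `APS(v, α, β)`. -/
def IsAPS (v : ℕ) (α β : ZMod v) (S : Finset (ZMod v × ZMod v)) : Prop :=
  IsPPS ({0, α, -α} : Set (ZMod v)) ({0, β, -β} : Set (ZMod v)) S

/-- A partitionable set `PS(v)`. -/
def IsPS (v : ℕ) (S : Finset (ZMod v × ZMod v)) : Prop :=
  IsPPS ({0} : Set (ZMod v)) ({0} : Set (ZMod v)) S


/-!
Summing `z ^ 2` over the two lists of a PPS: a pair `(x, y)` contributes `2 (x² + y²)` to the
first list and `2 ((x + y)² + (x - y)²) = 4 (x² + y²)` to the second, while the sum of `z ^ 2`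
over all of `ZMod (p²)` vanishes because `z ↦ √2 z` permutes it and doubles the sum. As the
lists cover the complements of `{0, ±α, ±pα}` and `{0, ±β, ±pβ}`, this forces `2β² = 4α²`.

Conversely, put `θ = 1 + √2`. Since `θ ^ (p(p-1)/2) = ±1` and `θ ^ ((p-1)/2) ≡ ±1 (mod p)`, the
generator hypothesis makes every unit of `ZMod (p²)` one of the `±αθˢ` with `s < p(p-1)/2` and
every nonzero multiple of `p` one of the `±pαθˢ` with `s < (p-1)/2`; together with `0` these
are `p²` entries, so none repeats. Both bounds are odd for `p ≡ 3 (mod 4)`, so the terms with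
`s ≥ 1` split into consecutive pairs `(αθ^(2i+1), αθ^(2i+2))`, and likewise for `pα`. Since
`θ + θ² = √2 θ²` and `θ - θ² = -√2 θ`, the sums and differences of these pairs run through the
same pattern for `√2 α`, which gives a PPS for `β = ±√2 α`.
-/

lemma Multiset.nodup_of_nodup_bind {α β : Type*} {s : Multiset α} {f : α → Multiset β}
    (h : (s.bind f).Nodup) (hf : ∀ a ∈ s, f a ≠ 0) : s.Nodup := by
  obtain ⟨l, rfl, hl⟩ := (Multiset.nodup_bind.mp h).2
  refine Multiset.coe_nodup.mpr (hl.imp_of_mem fun ha _ hdisj hab => ?_)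
  subst hab
  exact hf _ ha (disjoint_self.mp hdisj)

lemma Multiset.bind_range_two_mul {α : Type*} (g : ℕ → Multiset α) (K : ℕ) :
    (Multiset.range (2 * K)).bind g
      = (Multiset.range K).bind fun i => g (2 * i) + g (2 * i + 1) := by
  induction K with
  | zero => simp
  | succ K ih =>
    rw [show 2 * (K + 1) = 2 * K + 1 + 1 by ring, Multiset.range_succ, Multiset.range_succ,
      Multiset.cons_bind, Multiset.cons_bind, ih, Multiset.range_succ, Multiset.cons_bind]
    abel

lemma Multiset.count_eq_ite_iff_add_eq_univ {α : Type*} [Fintype α] {T B : Multiset α}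
    {A : Set α} (hB : B.Nodup) (hA : ∀ z, z ∈ B ↔ z ∈ A) :
    (∀ z, T.count z = if z ∈ A then 0 else 1) ↔ T + B = Finset.univ.val := by
  rw [Multiset.ext]
  refine forall_congr' fun z => ?_
  rw [Multiset.count_add, Multiset.count_eq_of_nodup hB,
    Multiset.count_eq_of_nodup Finset.univ.nodup]
  simp only [hA, Finset.mem_val, Finset.mem_univ, if_true]
  split_ifs <;> omega

section SignedRange

variable {G : Type*} [AddCommGroup G]

def signedRange (u : ℕ → G) (n : ℕ) : Multiset G :=
  (Multiset.range n).bind fun s => {u s, -u s}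

lemma mem_signedRange {u : ℕ → G} {n : ℕ} {z : G} :
    z ∈ signedRange u n ↔ ∃ s < n, z = u s ∨ z = -u s := by
  simp only [signedRange, Multiset.mem_bind, Multiset.mem_range, Multiset.insert_eq_cons,
    Multiset.mem_cons, Multiset.mem_singleton]

lemma card_signedRange (u : ℕ → G) (n : ℕ) : Multiset.card (signedRange u n) = 2 * n := by
  simp [signedRange, two_mul]

lemma signedRange_one_add (u : ℕ → G) (n : ℕ) :
    signedRange u (1 + n) = {u 0, -u 0} + signedRange (fun s => u (1 + s)) n := by
  rw [signedRange, Multiset.range_add, Multiset.add_bind, Multiset.bind_map]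
  simp only [Multiset.range_succ, Multiset.range_zero, Multiset.cons_bind, Multiset.zero_bind,
    add_zero]
  rfl

def consecutivePairs (u : ℕ → G) (K : ℕ) : Multiset (G × G) :=
  (Multiset.range K).map fun i => (u (2 * i), u (2 * i + 1))

lemma consecutivePairs_bind_pm (u : ℕ → G) (K : ℕ) :
    (consecutivePairs u K).bind (fun q => {q.1, -q.1, q.2, -q.2}) = signedRange u (2 * K) := by
  rw [consecutivePairs, signedRange, Multiset.bind_range_two_mul, Multiset.bind_map]
  rfl

lemma consecutivePairs_bind_add_sub {u v : ℕ → G} (K : ℕ)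
    (hadd : ∀ i, u (2 * i) + u (2 * i + 1) = v (2 * i + 1))
    (hsub : ∀ i, u (2 * i) - u (2 * i + 1) = -v (2 * i)) :
    (consecutivePairs u K).bind (fun q => {q.1 + q.2, -(q.1 + q.2), q.1 - q.2, -(q.1 - q.2)})
      = signedRange v (2 * K) := by
  rw [consecutivePairs, signedRange, Multiset.bind_range_two_mul, Multiset.bind_map]
  refine Multiset.bind_congr fun i _ => ?_
  simp only [hadd, hsub, neg_neg, Multiset.insert_eq_cons, ← Multiset.singleton_add]
  abel

lemma exists_isPPS_of_count {A₁ A₂ : Set G} (m : Multiset (G × G))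
    (h₁ : ∀ z, (m.bind fun q => ({q.1, -q.1, q.2, -q.2} : Multiset G)).count z
      = if z ∈ A₁ then 0 else 1)
    (h₂ : ∀ z, (m.bind fun q =>
      ({q.1 + q.2, -(q.1 + q.2), q.1 - q.2, -(q.1 - q.2)} : Multiset G)).count z
      = if z ∈ A₂ then 0 else 1) :
    ∃ S, IsPPS A₁ A₂ S := by
  have hbind : (m.bind fun q => ({q.1, -q.1, q.2, -q.2} : Multiset G)).Nodup :=
    Multiset.nodup_iff_count_le_one.mpr fun z => by rw [h₁]; split_ifs <;> simp
  exact ⟨⟨m, Multiset.nodup_of_nodup_bind hbind fun _ _ => Multiset.cons_ne_zero⟩, h₁, h₂⟩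

end SignedRange

section SumOfSquares

variable {R : Type*} [CommRing R]

lemma isUnit_of_sq_eq_two {r : R} (h2 : IsUnit (2 : R)) (hr : r ^ 2 = 2) : IsUnit r :=
  (isUnit_pow_iff two_ne_zero).mp (hr ▸ h2)

lemma Fintype.sum_sq_eq_zero_of_sq_eq_two [Fintype R] {r : R} (hu : IsUnit r) (hr : r ^ 2 = 2) :
    ∑ z : R, z ^ 2 = 0 := by
  have h : ∑ z : R, z ^ 2 = 2 * ∑ z : R, z ^ 2 := by
    calc ∑ z : R, z ^ 2 = ∑ z : R, (r * z) ^ 2 :=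
          (Equiv.sum_comp (Units.mulLeft hu.unit) (· ^ 2)).symm
      _ = 2 * ∑ z : R, z ^ 2 := by simp only [mul_pow, hr, Finset.mul_sum]
  linear_combination -h

lemma sum_sq_eq_two_mul_of_isPPS [Fintype R] (hsum : ∑ z : R, z ^ 2 = 0) {A₁ A₂ : Set R}
    {B₁ B₂ : Multiset R} (hB₁ : B₁.Nodup) (hB₂ : B₂.Nodup) (hA₁ : ∀ z, z ∈ B₁ ↔ z ∈ A₁)
    (hA₂ : ∀ z, z ∈ B₂ ↔ z ∈ A₂) {S : Finset (R × R)} (hS : IsPPS A₁ A₂ S) :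
    (B₂.map (· ^ 2)).sum = 2 * (B₁.map (· ^ 2)).sum := by
  have hcompl : ∀ {T B : Multiset R}, T + B = Finset.univ.val →
      (T.map (· ^ 2)).sum = -(B.map (· ^ 2)).sum := fun h => by
    have := congrArg (fun m => (m.map (· ^ 2)).sum) h
    simp only [Multiset.map_add, Multiset.sum_add] at this
    rw [← Finset.sum_eq_multiset_sum, hsum] at this
    linear_combination this
  have h₁ := hcompl ((Multiset.count_eq_ite_iff_add_eq_univ hB₁ hA₁).mp hS.1)
  have h₂ := hcompl ((Multiset.count_eq_ite_iff_add_eq_univ hB₂ hA₂).mp hS.2)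
  have hpair : ∀ q : R × R,
      (({q.1 + q.2, -(q.1 + q.2), q.1 - q.2, -(q.1 - q.2)} : Multiset R).map (· ^ 2)).sum
        = 2 * (({q.1, -q.1, q.2, -q.2} : Multiset R).map (· ^ 2)).sum := fun q => by
    simp only [Multiset.insert_eq_cons, Multiset.map_cons, Multiset.sum_cons,
      Multiset.map_singleton, Multiset.sum_singleton]
    ring
  simp only [Multiset.map_bind, Multiset.sum_bind, hpair, Multiset.sum_map_mul_left] at h₁ h₂
  linear_combination h₂ - 2 * h₁

end SumOfSquares

section Generators

variable {M : Type*} [CommMonoid M] [HasDistribNeg M] {θ γ : M}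

lemma exists_lt_pow_eq_or_eq_neg {n : ℕ} (hn : 0 < n) (hθ : θ ^ n = 1 ∨ θ ^ n = -1) (i : ℕ) :
    ∃ s < n, θ ^ i = θ ^ s ∨ θ ^ i = -θ ^ s := by
  refine ⟨i % n, Nat.mod_lt i hn, ?_⟩
  have hsplit : θ ^ i = (θ ^ n) ^ (i / n) * θ ^ (i % n) := by
    rw [← pow_mul, ← pow_add, Nat.div_add_mod]
  rcases hθ with h | h
  · simp [hsplit, h]
  · rcases neg_one_pow_eq_or M (i / n) with h' | h' <;> simp [hsplit, h, h']

lemma exists_eq_mul_pow_of_isUnit (hgen : ∀ x : M, IsUnit x → ∃ i : ℕ, x = θ ^ i ∨ x = -(θ ^ i))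
    (hγ : IsUnit γ) {x : M} (hx : IsUnit x) : ∃ i : ℕ, x = γ * θ ^ i ∨ x = -(γ * θ ^ i) := by
  obtain ⟨i, hi⟩ := hgen (x * ↑hγ.unit⁻¹) (hx.mul (Units.isUnit _))
  have hx' : x = γ * (x * ↑hγ.unit⁻¹) := by rw [mul_left_comm, hγ.mul_val_inv, mul_one]
  refine ⟨i, ?_⟩
  rw [hx', ← mul_neg]
  rcases hi with h | h <;> simp [h]

end Generators

section Excluded

variable {p : ℕ}

def reduceModP (p : ℕ) : ZMod (p ^ 2) →+* ZMod p :=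
  ZMod.castHom (dvd_pow_self p two_ne_zero) (ZMod p)

lemma natCast_sq_eq_zero (p : ℕ) : (p : ZMod (p ^ 2)) ^ 2 = 0 := by
  rw [← Nat.cast_pow, ZMod.natCast_self]

def excluded (p : ℕ) (γ : ZMod (p ^ 2)) : Multiset (ZMod (p ^ 2)) :=
  {0, γ, -γ, (p : ZMod (p ^ 2)) * γ, -((p : ZMod (p ^ 2)) * γ)}

lemma mem_excluded {γ z : ZMod (p ^ 2)} :
    z ∈ excluded p γ ↔
      z ∈ ({0, γ, -γ, (p : ZMod (p ^ 2)) * γ, -((p : ZMod (p ^ 2)) * γ)} : Set (ZMod (p ^ 2))) := by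
  simp [excluded]

lemma excluded_neg (γ : ZMod (p ^ 2)) : excluded p (-γ) = excluded p γ := by
  simp only [excluded, neg_neg, mul_neg, Multiset.insert_eq_cons, ← Multiset.singleton_add]
  abel

lemma sum_map_sq_excluded (γ : ZMod (p ^ 2)) : ((excluded p γ).map (· ^ 2)).sum = 2 * γ ^ 2 := by
  simp only [excluded, Multiset.insert_eq_cons, Multiset.map_cons, Multiset.sum_cons,
    Multiset.map_singleton, Multiset.sum_singleton]
  linear_combination (2 * γ ^ 2) * natCast_sq_eq_zero p

end Excluded

section ZModPrimeSq

variable {p : ℕ} [hp : Fact p.Prime]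

lemma natCast_mul_eq_zero_iff (x : ZMod (p ^ 2)) :
    (p : ZMod (p ^ 2)) * x = 0 ↔ reduceModP p x = 0 := by
  obtain ⟨n, rfl⟩ := ZMod.natCast_zmod_surjective x
  rw [← Nat.cast_mul, map_natCast, ZMod.natCast_eq_zero_iff, ZMod.natCast_eq_zero_iff, pow_two,
    Nat.mul_dvd_mul_iff_left hp.out.pos]

lemma natCast_mul_eq_natCast_mul_iff (x y : ZMod (p ^ 2)) :
    (p : ZMod (p ^ 2)) * x = (p : ZMod (p ^ 2)) * y ↔ reduceModP p x = reduceModP p y := by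
  rw [← sub_eq_zero, ← mul_sub, natCast_mul_eq_zero_iff, map_sub, sub_eq_zero]

lemma isUnit_iff_reduceModP_ne_zero (x : ZMod (p ^ 2)) : IsUnit x ↔ reduceModP p x ≠ 0 := by
  obtain ⟨n, rfl⟩ := ZMod.natCast_zmod_surjective x
  rw [ZMod.isUnit_natCast_iff_not_dvd_pow hp.out two_pos, map_natCast, Ne,
    ZMod.natCast_eq_zero_iff]

lemma natCast_dvd_iff_not_isUnit (x : ZMod (p ^ 2)) : (p : ZMod (p ^ 2)) ∣ x ↔ ¬IsUnit x := by
  refine ⟨fun ⟨c, hc⟩ => ?_, fun hx => ?_⟩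
  · rw [isUnit_iff_reduceModP_ne_zero, hc, map_mul, map_natCast, ZMod.natCast_self, zero_mul]
    exact fun h => h rfl
  · obtain ⟨n, rfl⟩ := ZMod.natCast_zmod_surjective x
    rw [ZMod.isUnit_natCast_iff_not_dvd_pow hp.out two_pos, not_not] at hx
    obtain ⟨k, rfl⟩ := hx
    exact ⟨k, by push_cast; rfl⟩

lemma isUnit_two_of_ne_two (hp2 : p ≠ 2) : IsUnit (2 : ZMod (p ^ 2)) := by
  rw [show (2 : ZMod (p ^ 2)) = ((2 : ℕ) : ZMod (p ^ 2)) by norm_cast,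
    ZMod.isUnit_natCast_iff_not_dvd_pow hp.out two_pos]
  exact fun h => hp2 ((Nat.prime_dvd_prime_iff_eq hp.out Nat.prime_two).mp h)

lemma eq_one_or_eq_neg_one_of_sq_eq_one (hp2 : p ≠ 2) {x : ZMod (p ^ 2)} (hx : x ^ 2 = 1) :
    x = 1 ∨ x = -1 := by
  have hprod : (x - 1) * (x + 1) = 0 := by linear_combination hx
  by_cases hu : IsUnit (x - 1)
  · exact Or.inr (eq_neg_of_add_eq_zero_left ((hu.mul_right_eq_zero).mp hprod))
  -- `x - 1` and `x + 1` differ by the unit `2`, so they are not both multiples of `p`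
  have hu' : IsUnit (x + 1) := by
    have h2 := (isUnit_iff_reduceModP_ne_zero _).mp (isUnit_two_of_ne_two hp2)
    rw [isUnit_iff_reduceModP_ne_zero, not_not] at hu
    rw [isUnit_iff_reduceModP_ne_zero, show x + 1 = (x - 1) + 2 by ring, map_add, hu, zero_add]
    exact h2
  exact Or.inl (sub_eq_zero.mp ((hu'.mul_left_eq_zero).mp hprod))

lemma eq_or_eq_neg_of_sq_eq_sq_of_isUnit (hp2 : p ≠ 2) {x y : ZMod (p ^ 2)} (hx : IsUnit x)
    (h : x ^ 2 = y ^ 2) : x = y ∨ x = -y := by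
  have hsq : (y * ↑hx.unit⁻¹) ^ 2 = 1 := by
    rw [mul_pow, ← h, ← mul_pow, hx.mul_val_inv, one_pow]
  have hy : y = y * ↑hx.unit⁻¹ * x := by rw [mul_assoc, hx.val_inv_mul, mul_one]
  rcases eq_one_or_eq_neg_one_of_sq_eq_one hp2 hsq with h' | h' <;> rw [h'] at hy
  · exact Or.inl (by rw [hy, one_mul])
  · exact Or.inr (by rw [hy]; ring)

lemma nodup_excluded (hp2 : p ≠ 2) {γ : ZMod (p ^ 2)} (hγ : IsUnit γ) : (excluded p γ).Nodup := by
  have hγ' := (isUnit_iff_reduceModP_ne_zero γ).mp hγ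
  have h2γ := (isUnit_iff_reduceModP_ne_zero _).mp ((isUnit_two_of_ne_two hp2).mul hγ)
  have hpγ : ¬IsUnit ((p : ZMod (p ^ 2)) * γ) :=
    (natCast_dvd_iff_not_isUnit _).mp (dvd_mul_right _ _)
  have h₀ : γ ≠ 0 := fun h => hγ' (by rw [h, map_zero])
  have h₁ : γ ≠ (p : ZMod (p ^ 2)) * γ := fun h => hpγ (h ▸ hγ)
  have h₂ : γ ≠ -((p : ZMod (p ^ 2)) * γ) := fun h =>
    hpγ (by rw [← neg_eq_iff_eq_neg.mpr h]; exact hγ.neg)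
  have h₃ : (p : ZMod (p ^ 2)) * γ ≠ 0 := fun h => hγ' ((natCast_mul_eq_zero_iff γ).mp h)
  have h₄ : γ ≠ -γ := fun h => h2γ (by rw [show 2 * γ = 0 by linear_combination h, map_zero])
  have h₅ : (p : ZMod (p ^ 2)) * γ ≠ -((p : ZMod (p ^ 2)) * γ) := fun h =>
    h2γ ((natCast_mul_eq_zero_iff _).mp (by linear_combination h))
  simp [excluded, h₀, h₁, h₂, h₃, h₄, h₅, h₀.symm, h₃.symm, neg_eq_iff_eq_neg]

variable {θ γ : ZMod (p ^ 2)}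

lemma pow_mul_half_eq_one_or (hp2 : p ≠ 2) (hθ : IsUnit θ) :
    θ ^ (p * ((p - 1) / 2)) = 1 ∨ θ ^ (p * ((p - 1) / 2)) = -1 := by
  refine eq_one_or_eq_neg_one_of_sq_eq_one hp2 ?_
  have htot : Nat.totient (p ^ 2) = p * ((p - 1) / 2) * 2 := by
    rw [Nat.totient_prime_pow_succ hp.out 1, pow_one, mul_assoc, mul_comm _ 2,
      Nat.two_mul_div_two_of_even (hp.out.even_sub_one hp2)]
  rw [← pow_mul, ← htot]
  have h := ZMod.pow_totient hθ.unit
  rwa [← Units.val_inj, Units.val_pow_eq_pow_val, IsUnit.unit_spec, Units.val_one] at h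

lemma reduceModP_pow_half_eq_one_or (hp2 : p ≠ 2) (hθ : IsUnit θ) :
    reduceModP p θ ^ ((p - 1) / 2) = 1 ∨ reduceModP p θ ^ ((p - 1) / 2) = -1 := by
  rw [← mul_self_eq_one_iff, ← pow_add, ← two_mul,
    Nat.two_mul_div_two_of_even (hp.out.even_sub_one hp2)]
  exact ZMod.pow_card_sub_one_eq_one ((isUnit_iff_reduceModP_ne_zero θ).mp hθ)

lemma eq_zero_or_mem_signedRange
    (hgen : ∀ x : ZMod (p ^ 2), IsUnit x → ∃ i : ℕ, x = θ ^ i ∨ x = -(θ ^ i))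
    (hγ : IsUnit γ) {n m : ℕ} (hn : 0 < n) (hθn : θ ^ n = 1 ∨ θ ^ n = -1) (hm : 0 < m)
    (hθm : reduceModP p θ ^ m = 1 ∨ reduceModP p θ ^ m = -1) (z : ZMod (p ^ 2)) :
    z = 0 ∨ z ∈ signedRange (fun s => γ * θ ^ s) n
      + signedRange (fun s => (p : ZMod (p ^ 2)) * (γ * θ ^ s)) m := by
  rw [Multiset.mem_add, mem_signedRange, mem_signedRange]
  by_cases hz : IsUnit z
  · obtain ⟨i, hi⟩ := exists_eq_mul_pow_of_isUnit hgen hγ hz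
    obtain ⟨s, hs, hθs⟩ := exists_lt_pow_eq_or_eq_neg hn hθn i
    refine Or.inr (Or.inl ⟨s, hs, ?_⟩)
    rcases hi with rfl | rfl <;> rcases hθs with h | h <;> simp [h]
  obtain ⟨c, rfl⟩ := (natCast_dvd_iff_not_isUnit z).mpr hz
  by_cases hc : (p : ZMod (p ^ 2)) * c = 0
  · exact Or.inl hc
  have hcu : IsUnit c :=
    (isUnit_iff_reduceModP_ne_zero c).mpr fun h => hc ((natCast_mul_eq_zero_iff c).mpr h)
  obtain ⟨i, hi⟩ := exists_eq_mul_pow_of_isUnit hgen hγ hcu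
  obtain ⟨s, hs, hθs⟩ := exists_lt_pow_eq_or_eq_neg hm hθm i
  refine Or.inr (Or.inr ⟨s, hs, ?_⟩)
  -- multiplication by `p` only sees residues mod `p`, where `θ ^ m = ± 1`
  have key : (p : ZMod (p ^ 2)) * (γ * θ ^ i) = (p : ZMod (p ^ 2)) * (γ * θ ^ s) ∨
      (p : ZMod (p ^ 2)) * (γ * θ ^ i) = (p : ZMod (p ^ 2)) * -(γ * θ ^ s) := by
    simp only [natCast_mul_eq_natCast_mul_iff, map_mul, map_neg, map_pow]
    rcases hθs with h | h <;> simp [h]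
  rcases hi with rfl | rfl <;> rcases key with h | h <;> simp [h]

lemma zero_add_signedRange_add_signedRange_eq_univ
    (hgen : ∀ x : ZMod (p ^ 2), IsUnit x → ∃ i : ℕ, x = θ ^ i ∨ x = -(θ ^ i))
    (hγ : IsUnit γ) {n m : ℕ} (hn : 0 < n) (hθn : θ ^ n = 1 ∨ θ ^ n = -1) (hm : 0 < m)
    (hθm : reduceModP p θ ^ m = 1 ∨ reduceModP p θ ^ m = -1)
    (hcard : 1 + 2 * n + 2 * m = p ^ 2) :
    {0} + signedRange (fun s => γ * θ ^ s) n
      + signedRange (fun s => (p : ZMod (p ^ 2)) * (γ * θ ^ s)) m = Finset.univ.val := by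
  refine (Multiset.eq_of_le_of_card_le
    ((Multiset.le_iff_subset Finset.univ.nodup).mpr fun z _ => ?_) ?_).symm
  · rw [add_assoc, Multiset.mem_add, Multiset.mem_singleton]
    exact eq_zero_or_mem_signedRange hgen hγ hn hθn hm hθm z
  · rw [Multiset.card_add, Multiset.card_add, card_signedRange, card_signedRange,
      Multiset.card_singleton, Finset.card_val, Finset.card_univ, ZMod.card, hcard]

lemma signedRange_add_signedRange_add_excluded_eq_univ
    (hgen : ∀ x : ZMod (p ^ 2), IsUnit x → ∃ i : ℕ, x = θ ^ i ∨ x = -(θ ^ i))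
    (hγ : IsUnit γ) {n m : ℕ} (hθn : θ ^ (1 + n) = 1 ∨ θ ^ (1 + n) = -1)
    (hθm : reduceModP p θ ^ (1 + m) = 1 ∨ reduceModP p θ ^ (1 + m) = -1)
    (hcard : 1 + 2 * (1 + n) + 2 * (1 + m) = p ^ 2) :
    signedRange (fun s => γ * θ ^ (1 + s)) n
      + signedRange (fun s => (p : ZMod (p ^ 2)) * (γ * θ ^ (1 + s))) m + excluded p γ
      = Finset.univ.val := by
  rw [← zero_add_signedRange_add_signedRange_eq_univ hgen hγ (by omega) hθn (by omega) hθm hcard,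
    signedRange_one_add, signedRange_one_add]
  simp only [excluded, pow_zero, mul_one, Multiset.insert_eq_cons, ← Multiset.singleton_add]
  abel

lemma two_mul_sq_sub_sq_eq_zero_of_isPPS (hp2 : p ≠ 2) {r α β : ZMod (p ^ 2)} (hr : r ^ 2 = 2)
    (hα : IsUnit α) (hβ : IsUnit β) {S : Finset (ZMod (p ^ 2) × ZMod (p ^ 2))}
    (hS : IsPPS
      ({0, α, -α, (p : ZMod (p ^ 2)) * α, -((p : ZMod (p ^ 2)) * α)} : Set (ZMod (p ^ 2)))
      ({0, β, -β, (p : ZMod (p ^ 2)) * β, -((p : ZMod (p ^ 2)) * β)} : Set (ZMod (p ^ 2))) S) :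
    2 * α ^ 2 - β ^ 2 = 0 := by
  have h2 := isUnit_two_of_ne_two hp2
  have h := sum_sq_eq_two_mul_of_isPPS
    (Fintype.sum_sq_eq_zero_of_sq_eq_two (isUnit_of_sq_eq_two h2 hr) hr)
    (nodup_excluded hp2 hα) (nodup_excluded hp2 hβ) (fun _ => mem_excluded)
    (fun _ => mem_excluded) hS
  rw [sum_map_sq_excluded, sum_map_sq_excluded] at h
  exact h2.mul_left_cancel (by linear_combination -h)

lemma exists_isPPS_of_eq_mul (hp4 : p % 4 = 3) {r α β : ZMod (p ^ 2)} (hr : r ^ 2 = 2)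
    (hgen : ∀ x : ZMod (p ^ 2), IsUnit x → ∃ i : ℕ, x = (1 + r) ^ i ∨ x = -((1 + r) ^ i))
    (hα : IsUnit α) (hβ : β = r * α ∨ β = -(r * α)) :
    ∃ S : Finset (ZMod (p ^ 2) × ZMod (p ^ 2)), IsPPS
      ({0, α, -α, (p : ZMod (p ^ 2)) * α, -((p : ZMod (p ^ 2)) * α)} : Set (ZMod (p ^ 2)))
      ({0, β, -β, (p : ZMod (p ^ 2)) * β, -((p : ZMod (p ^ 2)) * β)} : Set (ZMod (p ^ 2))) S := by
  have hp2 : p ≠ 2 := by omega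
  have hθ : IsUnit (1 + r) := IsUnit.of_mul_eq_one (r - 1) (by linear_combination hr)
  have hrα : IsUnit (r * α) := (isUnit_of_sq_eq_two (isUnit_two_of_ne_two hp2) hr).mul hα
  obtain ⟨L, hL⟩ : ∃ L, p = 4 * L + 3 := ⟨p / 4, by omega⟩
  have hM : (p - 1) / 2 = 1 + 2 * L := by omega
  obtain ⟨K, hN⟩ : ∃ K, p * ((p - 1) / 2) = 1 + 2 * K :=
    ⟨p * L + 2 * L + 1, by rw [hM, hL]; ring⟩
  have hcard : 1 + 2 * (1 + 2 * K) + 2 * (1 + 2 * L) = p ^ 2 := by rw [← hN, hM, hL]; ring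
  have hcover : ∀ γ, IsUnit γ → signedRange (fun s => γ * (1 + r) ^ (1 + s)) (2 * K)
      + signedRange (fun s => (p : ZMod (p ^ 2)) * (γ * (1 + r) ^ (1 + s))) (2 * L)
      + excluded p γ = Finset.univ.val := fun γ hγ =>
    signedRange_add_signedRange_add_excluded_eq_univ hgen hγ
      (hN ▸ pow_mul_half_eq_one_or hp2 hθ) (hM ▸ reduceModP_pow_half_eq_one_or hp2 hθ) hcard
  refine exists_isPPS_of_count (consecutivePairs (fun s => α * (1 + r) ^ (1 + s)) K
    + consecutivePairs (fun s => (p : ZMod (p ^ 2)) * (α * (1 + r) ^ (1 + s))) L) ?_ ?_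
  · rw [Multiset.count_eq_ite_iff_add_eq_univ (nodup_excluded hp2 hα) fun _ => mem_excluded,
      Multiset.add_bind, consecutivePairs_bind_pm, consecutivePairs_bind_pm]
    exact hcover α hα
  · have hA : ∀ z, z ∈ excluded p (r * α) ↔ z ∈
        ({0, β, -β, (p : ZMod (p ^ 2)) * β, -((p : ZMod (p ^ 2)) * β)} : Set (ZMod (p ^ 2))) := by
      rcases hβ with rfl | rfl
      · exact fun _ => mem_excluded
      · exact fun _ => by rw [← excluded_neg]; exact mem_excluded
    rw [Multiset.count_eq_ite_iff_add_eq_univ (nodup_excluded hp2 hrα) hA, Multiset.add_bind,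
      consecutivePairs_bind_add_sub K (v := fun s => r * α * (1 + r) ^ (1 + s))
        (fun i => by linear_combination (-(α * (1 + r) ^ (1 + 2 * i))) * hr) (fun i => by ring),
      consecutivePairs_bind_add_sub L
        (v := fun s => (p : ZMod (p ^ 2)) * (r * α * (1 + r) ^ (1 + s)))
        (fun i => by linear_combination (-(p * α * (1 + r) ^ (1 + 2 * i)) : ZMod (p ^ 2)) * hr)
        (fun i => by ring)]
    exact hcover (r * α) hrα

end ZModPrimeSq

theorem stmt17 (p : ℕ) (hp : Nat.Prime p) (hp8 : p % 8 = 7)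
    (r : ZMod (p ^ 2)) (hr : r ^ 2 = 2)
    (hgen : ∀ x : ZMod (p ^ 2), IsUnit x →
      ∃ i : ℕ, x = (1 + r) ^ i ∨ x = -((1 + r) ^ i))
    (α β : ZMod (p ^ 2))
    (hα : ¬ ((p : ZMod (p ^ 2)) ∣ α)) (hβ : ¬ ((p : ZMod (p ^ 2)) ∣ β)) :
    (∃ S : Finset (ZMod (p ^ 2) × ZMod (p ^ 2)),
      IsPPS ({0, α, -α, (p : ZMod (p ^ 2)) * α, -((p : ZMod (p ^ 2)) * α)} : Set (ZMod (p ^ 2)))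
            ({0, β, -β, (p : ZMod (p ^ 2)) * β, -((p : ZMod (p ^ 2)) * β)} : Set (ZMod (p ^ 2))) S)
    ↔ 2 * α ^ 2 - β ^ 2 = 0 := by
  have := Fact.mk hp
  have hp2 : p ≠ 2 := by omega
  have hαu : IsUnit α := (natCast_dvd_iff_not_isUnit α).not_left.mp hα
  have hβu : IsUnit β := (natCast_dvd_iff_not_isUnit β).not_left.mp hβ
  refine ⟨fun ⟨S, hS⟩ => two_mul_sq_sub_sq_eq_zero_of_isPPS hp2 hr hαu hβu hS, fun h => ?_⟩
  have hβ' := eq_or_eq_neg_of_sq_eq_sq_of_isUnit hp2 hβu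
    (show β ^ 2 = (r * α) ^ 2 by linear_combination -h - α ^ 2 * hr)
  exact exists_isPPS_of_eq_mul (by omega) hr hgen hαu hβ'
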